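/- Let u, v : ℝⁿ → ℝⁿ be smooth closed 1-forms (i.e. ∂_a u_b = ∂_b u_a and ∂_a v_b = ∂_b v_a everywhere, identifying 1-forms with vector fields via the standard metric) and let Υ : ℝⁿ → ℝ be smooth. Then pointwise, Σ_{a,b} u_a ∂_b(∂_a(Υ v_b) − ∂_b(Υ v_a)) = Σ_{a,b} ∂_a ( u_b ( v_a ∂_b Υ − v_b ∂_a Υ ) ). -/

import Mathlib

open Finset

/-- The `a`-th coordinate partial derivative of a scalar function on `ℝⁿ`. -/
noncomputable def pd {n : ℕ} (a : Fin n) (f : (Fin n → ℝ) → ℝ) : (Fin n → ℝ) → ℝ :=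
  fun x => fderiv ℝ f x (Pi.single a 1)

lemma pd_sub {n : ℕ} (a : Fin n) {f g : (Fin n → ℝ) → ℝ} {x}
    (hf : DifferentiableAt ℝ f x) (hg : DifferentiableAt ℝ g x) :
    pd a (fun y => f y - g y) x = pd a f x - pd a g x := by
  simp [pd, fderiv_fun_sub hf hg]

lemma pd_add {n : ℕ} (a : Fin n) {f g : (Fin n → ℝ) → ℝ} {x}
    (hf : DifferentiableAt ℝ f x) (hg : DifferentiableAt ℝ g x) :
    pd a (fun y => f y + g y) x = pd a f x + pd a g x := by
  simp [pd, fderiv_fun_add hf hg]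

lemma pd_mul {n : ℕ} (a : Fin n) {f g : (Fin n → ℝ) → ℝ} {x}
    (hf : DifferentiableAt ℝ f x) (hg : DifferentiableAt ℝ g x) :
    pd a (fun y => f y * g y) x = pd a f x * g x + f x * pd a g x := by
  simp [pd, fderiv_fun_mul hf hg]; ring

lemma contDiff_pd {n : ℕ} (a : Fin n) {f : (Fin n → ℝ) → ℝ} (hf : ContDiff ℝ (⊤ : ℕ∞) f) :
    ContDiff ℝ (⊤ : ℕ∞) (pd a f) :=
  (hf.fderiv_right (by simp)).clm_apply contDiff_const

lemma pd_comm {n : ℕ} (a b : Fin n) {f : (Fin n → ℝ) → ℝ} (hf : ContDiff ℝ (⊤ : ℕ∞) f) (x) :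
    pd a (pd b f) x = pd b (pd a f) x := by
  have hdf : Differentiable ℝ f := hf.differentiable (by simp)
  have h1 : DifferentiableAt ℝ (fderiv ℝ f) x :=
    ((hf.fderiv_right (m := (⊤ : ℕ∞)) (by simp)).differentiable (by simp)).differentiableAt
  have key : ∀ p q : Fin n, pd p (pd q f) x
      = fderiv ℝ (fderiv ℝ f) x (Pi.single p 1) (Pi.single q 1) := by
    intro p q
    have h2 : pd q f = fun y => fderiv ℝ f y (Pi.single q 1) := rfl
    rw [pd, h2, fderiv_clm_apply h1 (differentiableAt_const _)]
    simp
  rw [key, key]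
  exact second_derivative_symmetric (fun y => (hdf y).hasFDerivAt) h1.hasFDerivAt _ _

lemma pd_pd_mul {n : ℕ} (a b : Fin n) {f g : (Fin n → ℝ) → ℝ}
    (hf : ContDiff ℝ (⊤ : ℕ∞) f) (hg : ContDiff ℝ (⊤ : ℕ∞) g) (x) :
    pd b (pd a (fun z => f z * g z)) x
      = pd b (pd a f) x * g x + pd a f x * pd b g x
        + pd b f x * pd a g x + f x * pd b (pd a g) x := by
  have hdf : Differentiable ℝ f := hf.differentiable (by simp)
  have hdg : Differentiable ℝ g := hg.differentiable (by simp)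
  have hdaf : Differentiable ℝ (pd a f) := (contDiff_pd a hf).differentiable (by simp)
  have hdag : Differentiable ℝ (pd a g) := (contDiff_pd a hg).differentiable (by simp)
  have h1 : pd a (fun z => f z * g z) = fun y => pd a f y * g y + f y * pd a g y :=
    funext fun y => pd_mul a (hdf y) (hdg y)
  rw [h1, pd_add b (f := fun y => pd a f y * g y) (g := fun y => f y * pd a g y) (((hdaf x).mul (hdg x))) (((hdf x).mul (hdag x))),
    pd_mul b (hdaf x) (hdg x), pd_mul b (hdf x) (hdag x)]
  ring

theorem q_like_divergence_identity (n : ℕ)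
    (u v : (Fin n → ℝ) → (Fin n → ℝ)) (Υ : (Fin n → ℝ) → ℝ)
    (hu : ContDiff ℝ (⊤ : ℕ∞) u) (hv : ContDiff ℝ (⊤ : ℕ∞) v) (hΥ : ContDiff ℝ (⊤ : ℕ∞) Υ)
    (hu_closed : ∀ (x : Fin n → ℝ) (a b : Fin n),
      pd a (fun y => u y b) x = pd b (fun y => u y a) x)
    (hv_closed : ∀ (x : Fin n → ℝ) (a b : Fin n),
      pd a (fun y => v y b) x = pd b (fun y => v y a) x)
    (x : Fin n → ℝ) :
    ∑ a, ∑ b, u x a *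
        pd b (fun y => pd a (fun z => Υ z * v z b) y - pd b (fun z => Υ z * v z a) y) x
      = ∑ a, ∑ b,
          pd a (fun y => u y b * (v y a * pd b Υ y - v y b * pd a Υ y)) x := by
  classical
  have hub : ∀ b, ContDiff ℝ (⊤ : ℕ∞) (fun y => u y b) := fun b => contDiff_pi.1 hu b
  have hvb : ∀ b, ContDiff ℝ (⊤ : ℕ∞) (fun y => v y b) := fun b => contDiff_pi.1 hv b
  -- the common middle expression
  set M : ℝ := ∑ a, ∑ b,
      (u x a * v x b * pd b (pd a Υ) x
        + u x a * pd a Υ x * pd b (fun y => v y b) x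
        - u x a * v x a * pd b (pd b Υ) x
        - u x a * pd b Υ x * pd a (fun y => v y b) x) with hM
  have hL : (∑ a, ∑ b, u x a *
        pd b (fun y => pd a (fun z => Υ z * v z b) y - pd b (fun z => Υ z * v z a) y) x)
      = M := by
    rw [hM]
    refine Finset.sum_congr rfl fun a _ => Finset.sum_congr rfl fun b _ => ?_
    have hF : DifferentiableAt ℝ (pd a (fun z => Υ z * v z b)) x :=
      ((contDiff_pd a (hΥ.mul (hvb b))).differentiable (by simp)).differentiableAt
    have hG : DifferentiableAt ℝ (pd b (fun z => Υ z * v z a)) x :=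
      ((contDiff_pd b (hΥ.mul (hvb a))).differentiable (by simp)).differentiableAt
    rw [pd_sub b hF hG, pd_pd_mul a b hΥ (hvb b) x, pd_pd_mul b b hΥ (hvb a) x,
      show (pd a (fun y => v y b)) = pd b (fun y => v y a) from
        funext fun y => hv_closed y a b,
      show pd b (fun y => v y a) x = pd a (fun y => v y b) x from hv_closed x b a]
    ring
  have hR : (∑ a, ∑ b,
        pd a (fun y => u y b * (v y a * pd b Υ y - v y b * pd a Υ y)) x)
      = (∑ a, ∑ b, pd a (fun y => u y b) x *
            (v x a * pd b Υ x - v x b * pd a Υ x))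
        + ∑ a, ∑ b, u x b *
            (pd a (fun y => v y a) x * pd b Υ x + v x a * pd a (pd b Υ) x
              - pd a (fun y => v y b) x * pd a Υ x - v x b * pd a (pd a Υ) x) := by
    rw [← Finset.sum_add_distrib]
    refine Finset.sum_congr rfl fun a _ => ?_
    rw [← Finset.sum_add_distrib]
    refine Finset.sum_congr rfl fun b _ => ?_
    have h1 : DifferentiableAt ℝ (fun y => v y a * pd b Υ y) x :=
      (((hvb a).mul (contDiff_pd b hΥ)).differentiable (by simp)).differentiableAt
    have h2 : DifferentiableAt ℝ (fun y => v y b * pd a Υ y) x :=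
      (((hvb b).mul (contDiff_pd a hΥ)).differentiable (by simp)).differentiableAt
    have hP : DifferentiableAt ℝ (fun y => v y a * pd b Υ y - v y b * pd a Υ y) x :=
      h1.sub h2
    rw [pd_mul a ((hub b).differentiable (by simp)).differentiableAt hP,
      pd_sub a h1 h2,
      pd_mul a ((hvb a).differentiable (by simp)).differentiableAt
        ((contDiff_pd b hΥ).differentiable (by simp)).differentiableAt,
      pd_mul a ((hvb b).differentiable (by simp)).differentiableAt
        ((contDiff_pd a hΥ).differentiable (by simp)).differentiableAt]
    ring
  have hS1 : (∑ a, ∑ b, pd a (fun y => u y b) x *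
        (v x a * pd b Υ x - v x b * pd a Υ x)) = 0 := by
    have hswap : (∑ a, ∑ b, pd a (fun y => u y b) x *
          (v x a * pd b Υ x - v x b * pd a Υ x))
        = ∑ b, ∑ a, pd a (fun y => u y b) x *
          (v x a * pd b Υ x - v x b * pd a Υ x) := Finset.sum_comm
    have hneg : (∑ b, ∑ a, pd a (fun y => u y b) x *
          (v x a * pd b Υ x - v x b * pd a Υ x))
        = -∑ b, ∑ a, pd b (fun y => u y a) x *
          (v x b * pd a Υ x - v x a * pd b Υ x) := by
      rw [← Finset.sum_neg_distrib]
      refine Finset.sum_congr rfl fun b _ => ?_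
      rw [← Finset.sum_neg_distrib]
      refine Finset.sum_congr rfl fun a _ => ?_
      rw [hu_closed x a b]; ring
    have : (∑ b, ∑ a, pd b (fun y => u y a) x *
          (v x b * pd a Υ x - v x a * pd b Υ x))
        = ∑ a, ∑ b, pd a (fun y => u y b) x *
          (v x a * pd b Υ x - v x b * pd a Υ x) := rfl
    rw [this] at hneg
    rw [hswap] at hneg ⊢
    linarith [hneg]
  have hS2 : (∑ a, ∑ b, u x b *
        (pd a (fun y => v y a) x * pd b Υ x + v x a * pd a (pd b Υ) x
          - pd a (fun y => v y b) x * pd a Υ x - v x b * pd a (pd a Υ) x)) = M := by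
    rw [hM, Finset.sum_comm]
    refine Finset.sum_congr rfl fun a _ => Finset.sum_congr rfl fun b _ => ?_
    rw [show pd b (fun y => v y a) x = pd a (fun y => v y b) x from hv_closed x b a]
    ring
  rw [hL, hR, hS1, hS2, zero_add]
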